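/- Front-door adjustment: in a CBN with observable X, M, Y and latent U, where U is a parent of X and Y, X is a parent of M, M is a parent of Y, and there are no other edges, P(Y=y | do(X=x)) = Σ_m P(M=m | X=x) Σ_{x'} P(Y=y | X=x', M=m) P(X=x'), where all probabilities on the right are computed from the observational distribution P(X,M,Y). -/
import Mathlib


/-- Observational distribution `P(X, M, Y) = ∑_u P(U)·P(X|U)·P(M|X)·P(Y|M,U)`
of the front-door CBN. -/
def frontdoorObs {A Mt B Ut : Type*} [Fintype Ut]
    (pU : Ut → ℝ) (pX : Ut → A → ℝ) (pM : A → Mt → ℝ) (pY : Mt → Ut → B → ℝ)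
    (a : A) (m : Mt) (b : B) : ℝ :=
  ∑ u, pU u * pX u a * pM a m * pY m u b

lemma sumB {A Mt B Ut : Type*} [Fintype B] [Fintype Ut]
    (pU : Ut → ℝ) (pX : Ut → A → ℝ) (pM : A → Mt → ℝ) (pY : Mt → Ut → B → ℝ)
    (hYsum : ∀ m u, ∑ b, pY m u b = 1) (a : A) (m : Mt) :
    ∑ b, frontdoorObs pU pX pM pY a m b = pM a m * ∑ u, pU u * pX u a := by
  unfold frontdoorObs
  rw [Finset.sum_comm, Finset.mul_sum]
  refine Finset.sum_congr rfl fun u _ => ?_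
  rw [← Finset.mul_sum, hYsum]
  ring

lemma sumMB {A Mt B Ut : Type*} [Fintype Mt] [Fintype B] [Fintype Ut]
    (pU : Ut → ℝ) (pX : Ut → A → ℝ) (pM : A → Mt → ℝ) (pY : Mt → Ut → B → ℝ)
    (hMsum : ∀ a, ∑ m, pM a m = 1) (hYsum : ∀ m u, ∑ b, pY m u b = 1) (a : A) :
    ∑ m, ∑ b, frontdoorObs pU pX pM pY a m b = ∑ u, pU u * pX u a := by
  simp only [sumB pU pX pM pY hYsum]
  rw [← Finset.sum_mul, hMsum, one_mul]

/-- Front-door adjustment: in a CBN with observable `X, M, Y` and latent `U`, where `U`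
is a parent of `X` and `Y`, `X` is a parent of `M`, `M` is a parent of `Y`, and there are
no other edges (joint `P(X,M,Y,U) = P(U)·P(X|U)·P(M|X)·P(Y|M,U)`),
`P(Y=y | do(X=x)) = ∑_m P(M=m | X=x) ∑_{x'} P(Y=y | X=x', M=m)·P(X=x')`,
where all probabilities on the right are computed from the observational distribution.
The interventional distribution under `do(X=x)` is
`P(M,Y,U | do(X=x)) = P(U)·P(M|X=x)·P(Y|M,U)`, marginalizing `M` and `U`. -/
theorem frontdoor_adjustment {A Mt B Ut : Type*}
    [Fintype A] [Fintype Mt] [Fintype B] [Fintype Ut]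
    (pU : Ut → ℝ) (pX : Ut → A → ℝ) (pM : A → Mt → ℝ) (pY : Mt → Ut → B → ℝ)
    (hUnn : ∀ u, 0 ≤ pU u) (hUsum : ∑ u, pU u = 1)
    (hXnn : ∀ u a, 0 ≤ pX u a) (hXsum : ∀ u, ∑ a, pX u a = 1)
    (hMnn : ∀ a m, 0 ≤ pM a m) (hMsum : ∀ a, ∑ m, pM a m = 1)
    (hYnn : ∀ m u b, 0 ≤ pY m u b) (hYsum : ∀ m u, ∑ b, pY m u b = 1)
    (x : A) (y : B)
    (hposX : ∀ a : A, 0 < ∑ m, ∑ b, frontdoorObs pU pX pM pY a m b)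
    (hposXM : ∀ (a : A) (m : Mt), 0 < ∑ b, frontdoorObs pU pX pM pY a m b) :
    ∑ m, ∑ u, pU u * pM x m * pY m u y
      = ∑ m, ((∑ b, frontdoorObs pU pX pM pY x m b)
                / (∑ m', ∑ b, frontdoorObs pU pX pM pY x m' b))
            * ∑ x', (frontdoorObs pU pX pM pY x' m y
                      / ∑ b, frontdoorObs pU pX pM pY x' m b)
                  * (∑ m', ∑ b, frontdoorObs pU pX pM pY x' m' b) := by

  have hq : ∀ a : A, 0 < ∑ u, pU u * pX u a := by
    intro a
    have := hposX a
    rwa [sumMB pU pX pM pY hMsum hYsum] at this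
  have hpM : ∀ (a : A) (m : Mt), 0 < pM a m := by
    intro a m
    have := hposXM a m
    rw [sumB pU pX pM pY hYsum] at this
    nlinarith [hMnn a m, hq a]
  have key : ∀ m, ∑ x', (frontdoorObs pU pX pM pY x' m y
                      / ∑ b, frontdoorObs pU pX pM pY x' m b)
                  * (∑ m', ∑ b, frontdoorObs pU pX pM pY x' m' b)
      = ∑ u, pU u * pY m u y := by
    intro m
    have : ∀ x' : A, (frontdoorObs pU pX pM pY x' m y
                      / ∑ b, frontdoorObs pU pX pM pY x' m b)
                  * (∑ m', ∑ b, frontdoorObs pU pX pM pY x' m' b)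
        = ∑ u, pU u * pX u x' * pY m u y := by
      intro x'
      rw [sumB pU pX pM pY hYsum, sumMB pU pX pM pY hMsum hYsum]
      unfold frontdoorObs
      rw [div_mul_eq_mul_div, mul_comm (pM x' m), div_mul_eq_div_div,
        mul_div_assoc, div_self (hq x').ne', mul_one]
      rw [Finset.sum_div]
      refine Finset.sum_congr rfl fun u _ => ?_
      field_simp [(hpM x' m).ne']
    simp only [this]
    rw [Finset.sum_comm]
    refine Finset.sum_congr rfl fun u _ => ?_
    rw [← Finset.sum_mul, ← Finset.mul_sum, hXsum, mul_one]
  simp only [key]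
  refine Finset.sum_congr rfl fun m _ => ?_
  rw [sumB pU pX pM pY hYsum, sumMB pU pX pM pY hMsum hYsum,
    mul_div_assoc, div_self (hq x).ne', mul_one, Finset.mul_sum]
  refine Finset.sum_congr rfl fun u _ => ?_
  ring
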